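/- Let k be a field, r ≥ 1, and A = k[x,y]/(x^2, x·y^r) with maximal ideal m = (x,y). Then ℓ(A/m^{n+1}) = 2n+1 for 0 ≤ n ≤ r and ℓ(A/m^{n+1}) = n + r + 1 for n > r. -/

import Mathlib

/-!
Both `(x², xy^r)` and `(x, y)^{n+1}` are monomial ideals of `k[x, y]`, so `A ⧸ m^{n+1}` is
`k[x, y]` modulo a monomial ideal, and the images of the monomials outside that ideal form a
`k`-basis. These standard monomials are `y^b` with `b ≤ n` and `x y^b` with `b < min r n`,
giving `ℓ(A ⧸ m^{n+1}) = n + 1 + min r n`.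
-/

open MvPolynomial Module Finsupp

namespace MvPolynomial

variable {σ : Type*}

theorem isCompl_restrictSupport_compl {R : Type*} [CommSemiring R] (s : Set (σ →₀ ℕ)) :
    IsCompl (restrictSupport R s) (restrictSupport R sᶜ) := by
  constructor
  · rw [Submodule.disjoint_def]
    intro p hps hpsc
    rw [mem_restrictSupport_iff] at hps hpsc
    rw [← support_eq_empty, ← Finset.coe_eq_empty, ← Set.subset_empty_iff,
      ← Set.inter_compl_self s]
    exact Set.subset_inter hps hpsc
  · rw [codisjoint_iff, restrictSupport_eq_span, restrictSupport_eq_span, ← Submodule.span_union,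
      ← Set.image_union, Set.union_compl_self, ← restrictSupport_eq_span, restrictSupport_univ]

theorem finrank_quotient_restrictSupportIdeal {k : Type*} [Field k] (s : Set (σ →₀ ℕ))
    (hs : IsUpperSet s) :
    finrank k (MvPolynomial σ k ⧸ restrictSupportIdeal k s hs) = Nat.card ↥sᶜ := by
  rw [← (Submodule.Quotient.restrictScalarsEquiv k _).finrank_eq,
    restrictScalars_restrictSupportIdeal,
    ((restrictSupport k s).quotientEquivOfIsCompl _ (isCompl_restrictSupport_compl s)).finrank_eq,
    finrank_eq_nat_card_basis (basisRestrictSupport k sᶜ)]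

theorem span_monomial_image_eq_restrictSupportIdeal {R : Type*} [CommSemiring R]
    (T : Set (σ →₀ ℕ)) :
    Ideal.span ((monomial · (1 : R)) '' T) =
      restrictSupportIdeal R (upperClosure T : Set (σ →₀ ℕ)) (upperClosure T).upper := by
  ext p
  rw [mem_ideal_span_monomial_image]
  rfl

theorem finrank_quotient_span_monomial_image {k : Type*} [Field k] (T : Set (σ →₀ ℕ)) :
    finrank k (MvPolynomial σ k ⧸ Ideal.span ((monomial · (1 : k)) '' T)) =
      Nat.card ↥(upperClosure T : Set (σ →₀ ℕ))ᶜ := by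
  rw [span_monomial_image_eq_restrictSupportIdeal, finrank_quotient_restrictSupportIdeal]

theorem idealOfVars_fin_two {R : Type*} [CommSemiring R] :
    idealOfVars (Fin 2) R = Ideal.span {X 0, X 1} := by
  rw [idealOfVars, ← Matrix.range_cons_cons_empty _ _ ![]]
  congr
  ext i
  fin_cases i <;> rfl

end MvPolynomial

theorem Finsupp.exists_degree_eq_le_iff {σ : Type*} {n : ℕ} {d : σ →₀ ℕ} :
    (∃ t ∈ degree ⁻¹' {n}, t ≤ d) ↔ n ≤ degree d :=
  ⟨fun ⟨_, ht, htd⟩ => ht ▸ degree_mono htd,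
    fun h => let ⟨t, htd, ht⟩ := exists_le_degree_eq d n h; ⟨t, ht, htd⟩⟩

theorem Ideal.finrank_quotient_map_pow {k A : Type*} [CommRing k] [CommRing A] [Algebra k A]
    (I J : Ideal A) (j : ℕ) :
    finrank k ((A ⧸ I) ⧸ J.map (Ideal.Quotient.mk I) ^ j) = finrank k (A ⧸ (I ⊔ J ^ j)) := by
  rw [← Ideal.map_pow]
  exact (DoubleQuot.quotQuotEquivQuotSupₐ k I _).toLinearEquiv.finrank_eq

/-- Exponents of the monomial generators `x²`, `x y^r` and `x^a y^b` (`a + b = n + 1`) of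
`(x², x y^r) + (x, y)^{n+1}`, with `x = X 0` and `y = X 1`. -/
def generatorExponents (r n : ℕ) : Set (Fin 2 →₀ ℕ) :=
  {single 0 2, single 0 1 + single 1 r} ∪ degree ⁻¹' {n + 1}

theorem span_sup_pow_idealOfVars_eq_span_monomial {R : Type*} [CommSemiring R] (r n : ℕ) :
    Ideal.span {X 0 ^ 2, X 0 * X 1 ^ r} ⊔ idealOfVars (Fin 2) R ^ (n + 1) =
      Ideal.span ((monomial · (1 : R)) '' generatorExponents r n) := by
  rw [generatorExponents, Set.image_union, Ideal.span_union, pow_idealOfVars_eq_span,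
    Set.image_pair, X_pow_eq_monomial, X_pow_eq_monomial, ← pow_one (X 0), X_pow_eq_monomial,
    monomial_mul, one_mul]

theorem mem_upperClosure_generatorExponents_iff (r n : ℕ) (d : Fin 2 →₀ ℕ) :
    d ∈ upperClosure (generatorExponents r n) ↔
      2 ≤ d 0 ∨ (1 ≤ d 0 ∧ r ≤ d 1) ∨ n + 1 ≤ d 0 + d 1 := by
  rw [mem_upperClosure, generatorExponents]
  simp only [Set.mem_union, or_and_right, exists_or, Finsupp.exists_degree_eq_le_iff]
  simp [le_def, Fin.forall_fin_two, degree_eq_sum, or_assoc]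

theorem natCard_compl_upperClosure_generatorExponents (r n : ℕ) :
    Nat.card ↥(upperClosure (generatorExponents r n) : Set (Fin 2 →₀ ℕ))ᶜ = n + 1 + min r n := by
  let e : (Fin 2 →₀ ℕ) ≃ ℕ × ℕ := equivFunOnFinite.trans (finTwoArrowEquiv ℕ)
  let S : Finset (ℕ × ℕ) := {0} ×ˢ Finset.range (n + 1) ∪ {1} ×ˢ Finset.range (min r n)
  have hS : S.card = n + 1 + min r n := by
    rw [Finset.card_union_of_disjoint, Finset.card_product, Finset.card_product]
    · simp
    · rw [Finset.disjoint_left]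
      simp
  rw [← hS, ← Nat.card_eq_finsetCard]
  refine Nat.card_congr (e.subtypeEquiv fun d => ?_)
  rw [Set.mem_compl_iff, SetLike.mem_coe, mem_upperClosure_generatorExponents_iff]
  simp [S, e, equivFunOnFinite_apply]
  omega

theorem finrank_quotient_span_sup_pow_idealOfVars {k : Type*} [Field k] (r n : ℕ) :
    finrank k (MvPolynomial (Fin 2) k ⧸
        (Ideal.span {X 0 ^ 2, X 0 * X 1 ^ r} ⊔ idealOfVars (Fin 2) k ^ (n + 1))) =
      n + 1 + min r n := by
  rw [span_sup_pow_idealOfVars_eq_span_monomial, finrank_quotient_span_monomial_image,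
    natCard_compl_upperClosure_generatorExponents]

set_option synthInstance.maxHeartbeats 1000000 in
set_option maxHeartbeats 1000000 in
theorem stmt12_general (k : Type*) [Field k] (r : ℕ)
    (I : Ideal (MvPolynomial (Fin 2) k))
    (hI : I = Ideal.span {(X 0 : MvPolynomial (Fin 2) k) ^ 2,
      (X 0 : MvPolynomial (Fin 2) k) * (X 1 : MvPolynomial (Fin 2) k) ^ r})
    (m : Ideal (MvPolynomial (Fin 2) k ⧸ I))
    (hm : m = Ideal.span {Ideal.Quotient.mk I (X 0), Ideal.Quotient.mk I (X 1)}) :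
    (∀ n : ℕ, n ≤ r →
        Module.finrank k ((MvPolynomial (Fin 2) k ⧸ I) ⧸ m ^ (n + 1)) = 2 * n + 1) ∧
      (∀ n : ℕ, r < n →
        Module.finrank k ((MvPolynomial (Fin 2) k ⧸ I) ⧸ m ^ (n + 1)) = n + r + 1) := by
  have hm_map : m = (idealOfVars (Fin 2) k).map (Ideal.Quotient.mk I) := by
    rw [hm, idealOfVars_fin_two, Ideal.map_span, Set.image_pair]
  have length (n : ℕ) :
      finrank k ((MvPolynomial (Fin 2) k ⧸ I) ⧸ m ^ (n + 1)) = n + 1 + min r n := by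
    rw [hm_map, Ideal.finrank_quotient_map_pow, hI, finrank_quotient_span_sup_pow_idealOfVars]
  exact ⟨fun n hn => by rw [length]; omega, fun n hn => by rw [length]; omega⟩

set_option synthInstance.maxHeartbeats 1000000 in
set_option maxHeartbeats 1000000 in
theorem stmt12 (k : Type*) [Field k] (r : ℕ) (hr : 1 ≤ r)
    (I : Ideal (MvPolynomial (Fin 2) k))
    (hI : I = Ideal.span {(X 0 : MvPolynomial (Fin 2) k) ^ 2,
      (X 0 : MvPolynomial (Fin 2) k) * (X 1 : MvPolynomial (Fin 2) k) ^ r})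
    (m : Ideal (MvPolynomial (Fin 2) k ⧸ I))
    (hm : m = Ideal.span {Ideal.Quotient.mk I (X 0), Ideal.Quotient.mk I (X 1)}) :
    (∀ n : ℕ, n ≤ r →
        Module.finrank k ((MvPolynomial (Fin 2) k ⧸ I) ⧸ m ^ (n + 1)) = 2 * n + 1) ∧
      (∀ n : ℕ, r < n →
        Module.finrank k ((MvPolynomial (Fin 2) k ⧸ I) ⧸ m ^ (n + 1)) = n + r + 1) :=
  stmt12_general k r I hI m hm
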